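/- arXiv:1604.07628 — 3 statements merged into one kernel-verified Lean document; each statement's English description precedes it below -/
import Mathlib

section
/- For all nonnegative integers n ≥ 1 and j, the identity n * ∑_{i=0}^{j} ((-j)_i (1-n)_i / ((2)_i i!)) 2^i = ∑_{i=0}^{j} 2^i * C(j,i) * C(n, i+1) holds, where the left side is n · ₂F₁(-j, 1-n; 2; 2). -/
/-!
Termwise: `(-j)_i = (-1)^i i! C(j,i)`, `(2)_i = (i+1)!`, and since `(-n)_{i+1} = -n (1-n)_i`,
also `n (1-n)_i = (-1)^i (i+1)! C(n,i+1)`; the signs cancel and so do the factorials.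
-/

open Finset

/-- Pochhammer (rising factorial) symbol `(x)_n`. -/
def poch (x : ℚ) (n : ℕ) : ℚ := ∏ k ∈ Finset.range n, (x + k)

lemma poch_eq_eval_ascPochhammer (x : ℚ) (n : ℕ) : poch x n = (ascPochhammer ℚ n).eval x := by
  induction n with
  | zero => simp [poch]
  | succ n ih => rw [poch, prod_range_succ, ← poch, ih, ascPochhammer_succ_eval]

lemma poch_succ_eq_mul_poch_add_one (x : ℚ) (n : ℕ) : poch x (n + 1) = x * poch (x + 1) n := by
  simp only [poch, prod_range_succ', Nat.cast_add, Nat.cast_one, Nat.cast_zero, add_zero]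
  rw [mul_comm]
  congr 1
  exact prod_congr rfl fun k _ => by ring

lemma poch_two (n : ℕ) : poch 2 n = ((n + 1).factorial : ℚ) := by
  simpa [poch_eq_eval_ascPochhammer, add_comm 1 n, one_add_one_eq_two] using
    factorial_mul_ascPochhammer ℚ 1 n

lemma poch_neg_natCast (m i : ℕ) :
    poch (-(m : ℚ)) i = (-1) ^ i * (i.factorial : ℚ) * (m.choose i : ℚ) := by
  rw [poch_eq_eval_ascPochhammer, ascPochhammer_eval_neg_eq_descPochhammer,
    descPochhammer_eval_eq_descFactorial, Nat.descFactorial_eq_factorial_mul_choose]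
  push_cast
  ring

lemma natCast_mul_poch_one_sub (n i : ℕ) :
    (n : ℚ) * poch (1 - n) i = (-1) ^ i * ((i + 1).factorial : ℚ) * (n.choose (i + 1) : ℚ) := by
  have h := poch_succ_eq_mul_poch_add_one (-(n : ℚ)) i
  rw [poch_neg_natCast, neg_add_eq_sub] at h
  linear_combination h

theorem n_mul_hypergeometric_eq_sum_general (n j : ℕ) :
    (n : ℚ) * ∑ i ∈ Finset.range (j + 1),
        poch (-(j : ℚ)) i * poch (1 - (n : ℚ)) i / (poch 2 i * (i.factorial : ℚ)) * 2 ^ i =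
      ∑ i ∈ Finset.range (j + 1),
        (2 : ℚ) ^ i * (j.choose i : ℚ) * (n.choose (i + 1) : ℚ) := by
  rw [mul_sum]
  refine sum_congr rfl fun i _ => ?_
  have hsign : ((-1 : ℚ) ^ i) ^ 2 = 1 := by rw [pow_right_comm, neg_one_sq, one_pow]
  calc (n : ℚ) * (poch (-(j : ℚ)) i * poch (1 - (n : ℚ)) i / (poch 2 i * (i.factorial : ℚ)) * 2 ^ i)
      = poch (-(j : ℚ)) i * ((n : ℚ) * poch (1 - n) i) / (poch 2 i * (i.factorial : ℚ)) * 2 ^ i := by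
        ring
    _ = 2 ^ i * (j.choose i : ℚ) * (n.choose (i + 1) : ℚ) := by
        rw [poch_neg_natCast, natCast_mul_poch_one_sub, poch_two]
        field_simp
        linear_combination ((j.choose i : ℚ) * (n.choose (i + 1) : ℚ)) * hsign

/-- For nonnegative integers `n ≥ 1` and `j`,
`n · ₂F₁(-j, 1-n; 2; 2) = ∑_{i=0}^{j} 2^i C(j,i) C(n, i+1)`. -/
theorem n_mul_hypergeometric_eq_sum (n j : ℕ) (hn : 1 ≤ n) :
    (n : ℚ) * ∑ i ∈ Finset.range (j + 1),
        poch (-(j : ℚ)) i * poch (1 - (n : ℚ)) i / (poch 2 i * (i.factorial : ℚ)) * 2 ^ i =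
      ∑ i ∈ Finset.range (j + 1),
        (2 : ℚ) ^ i * (j.choose i : ℚ) * (n.choose (i + 1) : ℚ) :=
  n_mul_hypergeometric_eq_sum_general n j
end

section
/- For all nonnegative integers j and n, the identity ₂F₁(-j-1,-n;1;2) = ₂F₁(-j,-n;1;2) + ₂F₁(-j-1,1-n;1;2) + ₂F₁(-j,1-n;1;2) holds for the terminating hypergeometric sums at z = 2. -/
/-!
Up to sign, `(-a)_k / k!` is the generalized binomial coefficient `C(a, k)`, so
`₂F₁(-j, -a; 1; 2) = ∑_k C(j, k) 2^k C(a, k)`, which for `a = n` is the Delannoy number `D(j, n)`.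
The identity is the Delannoy recurrence `D(j+1, a+1) = D(j, a+1) + D(j+1, a) + D(j, a)`; it follows
from Pascal's rule applied once in `j` and once in `a`, and holds for every `a` in a binomial ring.
-/

open Finset

/-- The terminating hypergeometric sum `₂F₁(-j, b; c; z) = ∑_{k=0}^{j} (-j)_k (b)_k z^k / ((c)_k k!)`. -/
def hypF (j : ℕ) (b c z : ℚ) : ℚ :=
  ∑ k ∈ Finset.range (j + 1), poch (-(j : ℚ)) k * poch b k * z ^ k / (poch c k * (k.factorial : ℚ))

open Polynomial in
theorem Ring.factorial_mul_choose_eq_prod_range {R : Type*} [CommRing R] [BinomialRing R]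
    (r : R) (k : ℕ) : (k.factorial : R) * Ring.choose r k = ∏ i ∈ range k, (r - i) := by
  rw [← nsmul_eq_mul, ← Ring.descPochhammer_eq_factorial_smul_choose, ← aeval_eq_smeval,
    aeval_def, ← eval_map, algebraMap_int_eq, descPochhammer_map,
    descPochhammer_eval_eq_prod_range]

section BinomialSum

variable {R : Type*} [CommRing R]

def binomialSum (x : R) (f : ℕ → R) (j : ℕ) : R :=
  ∑ k ∈ range (j + 1), j.choose k * x ^ k * f k

theorem binomialSum_add (x : R) (f g : ℕ → R) (j : ℕ) :
    binomialSum x (fun k => f k + g k) j = binomialSum x f j + binomialSum x g j := by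
  simp only [binomialSum, mul_add, sum_add_distrib]

theorem binomialSum_succ (x : R) (f : ℕ → R) (j : ℕ) :
    binomialSum x f (j + 1) =
      binomialSum x f j + x * binomialSum x (fun k => f (k + 1)) j := by
  have hext : binomialSum x f j = ∑ k ∈ range (j + 2), j.choose k * x ^ k * f k := by
    simp [binomialSum, sum_range_succ _ (j + 1)]
  rw [binomialSum, hext, binomialSum, mul_sum, sum_range_succ' _ (j + 1),
    sum_range_succ' _ (j + 1)]
  simp only [Nat.choose_succ_succ, Nat.cast_add, Nat.choose_zero_right]
  rw [add_right_comm, ← sum_add_distrib]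
  congr 1
  exact sum_congr rfl fun i _ => by ring

theorem binomialSum_choose_succ_succ [BinomialRing R] (x a : R) (j : ℕ) :
    binomialSum x (Ring.choose (a + 1)) (j + 1) =
      binomialSum x (Ring.choose (a + 1)) j + binomialSum x (Ring.choose a) (j + 1) +
        (x - 1) * binomialSum x (Ring.choose a) j := by
  have hpascal : binomialSum x (fun k => Ring.choose (a + 1) (k + 1)) j =
      binomialSum x (Ring.choose a) j + binomialSum x (fun k => Ring.choose a (k + 1)) j := by
    simp only [Ring.choose_succ_succ]
    exact binomialSum_add x _ _ j
  linear_combination binomialSum_succ x (Ring.choose (a + 1)) j -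
    binomialSum_succ x (Ring.choose a) j + x * hpascal

end BinomialSum

theorem poch_neg (a : ℚ) (k : ℕ) : poch (-a) k = (-1) ^ k * k.factorial * Ring.choose a k := by
  calc poch (-a) k = ∏ i ∈ range k, -(a - i) := prod_congr rfl fun i _ => by ring
    _ = (-1) ^ k * k.factorial * Ring.choose a k := by
      rw [prod_neg, card_range, mul_assoc, Ring.factorial_mul_choose_eq_prod_range]

theorem poch_one (k : ℕ) : poch 1 k = k.factorial := by
  rw [poch, ← prod_range_add_one_eq_factorial, Nat.cast_prod]
  exact prod_congr rfl fun i _ => by push_cast; ring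

theorem hypF_one_two (j : ℕ) (b : ℚ) : hypF j b 1 2 = binomialSum 2 (Ring.choose (-b)) j := by
  refine sum_congr rfl fun k _ => ?_
  rw [poch_neg, ← neg_neg b, poch_neg, neg_neg, poch_one, Ring.choose_natCast]
  field_simp
  rw [← pow_mul, pow_mul', neg_one_sq, one_pow, one_mul]

/-- `₂F₁(-j-1,-n;1;2) = ₂F₁(-j,-n;1;2) + ₂F₁(-j-1,1-n;1;2) + ₂F₁(-j,1-n;1;2)`. -/
theorem hypergeometric_four_term (j n : ℕ) :
    hypF (j + 1) (-(n : ℚ)) 1 2 =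
      hypF j (-(n : ℚ)) 1 2 + hypF (j + 1) (1 - (n : ℚ)) 1 2 + hypF j (1 - (n : ℚ)) 1 2 := by
  simp only [hypF_one_two, neg_neg, neg_sub]
  have h := binomialSum_choose_succ_succ (2 : ℚ) ((n : ℚ) - 1) j
  rw [sub_add_cancel] at h
  linear_combination h
end

section
/- For each j ≥ 0 define γ*(n) = ∑_{i=0}^{j} 2^i C(j,i) C(n-1,i) (as a polynomial in n). Then these satisfy the recursion (n+2)·γ*_{j}(n+3) = (2j+1)·(γ*_{j+1}(n+2) - γ*_{j+1}(n+1)) - (n+1)·(γ*_{j}(n+2) - γ*_{j}(n+1)) + n·γ*_{j}(n) for all integers n ≥ 0 and j ≥ 0, where γ*_j(m) = ∑_{i=0}^{j} 2^i C(j,i) C(m-1,i). -/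
/-!
For natural `x`, `delannoy j x` is the Delannoy number `D(j, x)`, and `γ*_j(m) = D(j, m - 1)`.
The recursion is the sum of the Pascal-type rule `D(j+1, x+1) - D(j+1, x) = D(j, x+1) + D(j, x)`
and two instances of the three-term recurrence `(x+1) D(j, x+1) = (2j+1) D(j, x) + x D(j, x-1)`,
which reflects `(1 - z²) H' = (2j + 1 + z) H` for the generating function
`H(z) = ∑ₓ D(j, x) zˣ = (1 + z)ʲ / (1 - z)ʲ⁺¹`.
Both rules hold for all rational `x`: summed over `i`, each telescopes with an explicit certificate.
-/

open Finset

/-- Generalized binomial coefficient `C(x, i)`. -/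
def gchoose (x : ℚ) (i : ℕ) : ℚ := (∏ k ∈ Finset.range i, (x - k)) / (i.factorial : ℚ)

/-- `γ*_j(m) = ∑_{i=0}^{j} 2^i C(j,i) C(m-1,i) = ₂F₁(-j, 1-m; 1; 2)`. -/
def gammaStar (j m : ℕ) : ℚ :=
  ∑ i ∈ Finset.range (j + 1), (2 : ℚ) ^ i * (j.choose i : ℚ) * gchoose ((m : ℚ) - 1) i

theorem sum_range_succ_eq_neg_of_telescoping {M : Type*} [AddCommGroup M] {f K : ℕ → M}
    (n : ℕ) (h0 : f 0 = -K 0) (hsucc : ∀ i, f (i + 1) = K i - K (i + 1)) :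
    ∑ i ∈ range (n + 1), f i = -K n := by
  rw [sum_range_succ', h0, sum_congr rfl fun i _ => hsucc i, sum_range_sub']
  abel

theorem cast_succ_mul_choose_succ {R : Type*} [CommRing R] (j i : ℕ) :
    ((i : R) + 1) * j.choose (i + 1) = (j - i) * j.choose i := by
  rcases le_or_gt i j with h | h
  · have := congrArg (Nat.cast : ℕ → R) (Nat.choose_succ_right_eq j i)
    push_cast [h] at this
    linear_combination this
  · simp [Nat.choose_eq_zero_of_lt h, Nat.choose_eq_zero_of_lt (h.trans (Nat.lt_succ_self _))]

theorem gchoose_zero_right (x : ℚ) : gchoose x 0 = 1 := by simp [gchoose]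

theorem gchoose_succ_succ (x : ℚ) (i : ℕ) :
    gchoose (x + 1) (i + 1) = gchoose x i + gchoose x (i + 1) := by
  have hprod : ∏ k ∈ range (i + 1), (x + 1 - k) = (x + 1) * ∏ k ∈ range i, (x - k) := by
    rw [prod_range_succ', mul_comm]
    push_cast
    simp only [sub_zero, add_sub_add_right_eq_sub]
  simp only [gchoose, hprod, prod_range_succ, Nat.factorial_succ]
  push_cast
  field_simp
  ring

theorem succ_mul_gchoose_succ (x : ℚ) (i : ℕ) :
    (i + 1) * gchoose x (i + 1) = (x - i) * gchoose x i := by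
  simp only [gchoose, prod_range_succ, Nat.factorial_succ]
  push_cast
  field_simp

theorem mul_gchoose_sub_one (x : ℚ) (i : ℕ) :
    x * gchoose (x - 1) i = (i + 1) * gchoose x (i + 1) := by
  have h := gchoose_succ_succ (x - 1) i
  rw [sub_add_cancel] at h
  linear_combination -(i + 1) * h - succ_mul_gchoose_succ (x - 1) i

def delannoyTerm (j : ℕ) (x : ℚ) (i : ℕ) : ℚ := 2 ^ i * j.choose i * gchoose x i

def delannoy (j : ℕ) (x : ℚ) : ℚ := ∑ i ∈ range (j + 1), delannoyTerm j x i

theorem gammaStar_eq_delannoy (j m : ℕ) : gammaStar j m = delannoy j (m - 1) := rfl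

theorem gammaStar_succ (j m : ℕ) : gammaStar j (m + 1) = delannoy j m := by
  simp [gammaStar_eq_delannoy]

theorem delannoy_eq_sum_range_add_two (j : ℕ) (x : ℚ) :
    delannoy j x = ∑ i ∈ range (j + 2), delannoyTerm j x i := by
  simp [delannoy, sum_range_succ _ (j + 1), delannoyTerm, Nat.choose_succ_self]

theorem delannoy_succ_sub_delannoy_succ (j : ℕ) (x : ℚ) :
    delannoy (j + 1) (x + 1) - delannoy (j + 1) x = delannoy j (x + 1) + delannoy j x := by
  rw [← sub_eq_zero]
  have h := sum_range_succ_eq_neg_of_telescoping (j + 1)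
    (f := fun i => delannoyTerm (j + 1) (x + 1) i - delannoyTerm (j + 1) x i
      - delannoyTerm j (x + 1) i - delannoyTerm j x i)
    (K := fun i => 2 * delannoyTerm j x i) ?_ ?_
  · have hK : delannoyTerm j x (j + 1) = 0 := by simp [delannoyTerm, Nat.choose_succ_self]
    rw [sum_sub_distrib, sum_sub_distrib, sum_sub_distrib, hK] at h
    rw [delannoy, delannoy, delannoy_eq_sum_range_add_two j, delannoy_eq_sum_range_add_two j]
    linear_combination h
  · norm_num [delannoyTerm, gchoose_zero_right]
  · intro i
    simp only [delannoyTerm, Nat.choose_succ_succ, gchoose_succ_succ]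
    push_cast
    ring

theorem succ_mul_delannoy_succ (j : ℕ) (x : ℚ) :
    (x + 1) * delannoy j (x + 1) = (2 * j + 1) * delannoy j x + x * delannoy j (x - 1) := by
  rw [← sub_eq_zero]
  have h := sum_range_succ_eq_neg_of_telescoping j
    (f := fun i => (x + 1) * delannoyTerm j (x + 1) i - (2 * j + 1) * delannoyTerm j x i
      - x * delannoyTerm j (x - 1) i)
    (K := fun i => 2 * (j - i) * delannoyTerm j x i) ?_ ?_
  · simp only [sum_sub_distrib, ← mul_sum, sub_self, zero_mul, mul_zero, neg_zero] at h
    rw [delannoy, delannoy, delannoy]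
    linear_combination h
  · simp [delannoyTerm, gchoose_zero_right]
  · intro i
    simp only [delannoyTerm, gchoose_succ_succ]
    have hx := mul_gchoose_sub_one x (i + 1)
    have ha := succ_mul_gchoose_succ x (i + 1)
    have hb := succ_mul_gchoose_succ x i
    have hc := cast_succ_mul_choose_succ (R := ℚ) j i
    push_cast at *
    linear_combination
      (-2 * 2 ^ i * (j.choose (i + 1) : ℚ)) * (hx + ha + hb) + 2 * 2 ^ i * gchoose x i * hc

/-- The recursion for the matrix-resolvent coefficients with `v_n = 0`, `w_n = n`:
`(n+2)·γ*_j(n+3) = (2j+1)·(γ*_{j+1}(n+2) - γ*_{j+1}(n+1)) - (n+1)·(γ*_j(n+2) - γ*_j(n+1)) + n·γ*_j(n)`. -/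
theorem gammaStar_recursion (n j : ℕ) :
    ((n : ℚ) + 2) * gammaStar j (n + 3) =
      (2 * (j : ℚ) + 1) * (gammaStar (j + 1) (n + 2) - gammaStar (j + 1) (n + 1))
        - ((n : ℚ) + 1) * (gammaStar j (n + 2) - gammaStar j (n + 1))
        + (n : ℚ) * gammaStar j n := by
  have hpascal := delannoy_succ_sub_delannoy_succ j n
  have hrec := succ_mul_delannoy_succ j n
  have hrec' := succ_mul_delannoy_succ j (n + 1)
  rw [add_sub_cancel_right, add_assoc, one_add_one_eq_two] at hrec'
  simp only [gammaStar_succ, gammaStar_eq_delannoy j n]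
  push_cast
  linear_combination hrec' - (2 * j + 1) * hpascal + hrec
end
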